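/- With the main setup (λ₁, λ₂, λ₃ nonzero reals, η real, 219/220 < γ < 1, θ > 0, 0 < λ₀ < 1; ε = X^{(219−220γ)/208+θ}; H = (log² X)/ε; Θ the Fourier transform of a smoothing function θ̂ with parameter ε and smoothness order k = ⌊log X⌋, so that |Θ(x)| ≤ (1/(π|x|))(k/(2π|x|ε/8))^k; S₁ and S₄ the Piatetski-Shapiro exponential sums S₁(t) = Σ_{λ₀X < p ≤ X, p=⌊n^{1/γ}⌋} p^{1−γ} e(tp) log p and S₄(t) = Σ_{λ₀X < p⁴ ≤ X, p=⌊n^{1/γ}⌋} p^{1−γ} e(tp⁴) log p), the tail integral Γ₃(X) = ∫_{|t|>H} Θ(t) S₁(λ₁t) S₁(λ₂t) S₄(λ₃t) e(ηt) dt satisfies Γ₃(X) ≪ 1 as X → ∞. -/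

import Mathlib

/-- `e(t) = e^{2πit}`. -/
noncomputable def e (t : ℝ) : ℂ := Complex.exp (2 * Real.pi * Complex.I * t)

/-- A Piatetski-Shapiro prime of type `γ`: a prime `p` with `p = ⌊n^{1/γ}⌋` for some `n : ℕ`. -/
def IsPSPrime (γ : ℝ) (p : ℕ) : Prop :=
  Nat.Prime p ∧ ∃ n : ℕ, (p : ℤ) = ⌊(n : ℝ) ^ (1 / γ)⌋

open Classical in
/-- `S₁(t) = Σ_{λ₀X < p ≤ X, p = ⌊n^{1/γ}⌋} p^{1-γ} e(tp) log p`. -/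
noncomputable def S₁ (γ l₀ X t : ℝ) : ℂ :=
  ∑ p ∈ Finset.range (⌊X⌋₊ + 1),
    if IsPSPrime γ p ∧ l₀ * X < (p : ℝ) ∧ (p : ℝ) ≤ X then
      ((p : ℝ) ^ (1 - γ) * Real.log p : ℝ) * e (t * p)
    else 0

open Classical in
/-- `S₄(t) = Σ_{λ₀X < p⁴ ≤ X, p = ⌊n^{1/γ}⌋} p^{1-γ} e(tp⁴) log p`. -/
noncomputable def S₄ (γ l₀ X t : ℝ) : ℂ :=
  ∑ p ∈ Finset.range (⌊X⌋₊ + 1),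
    if IsPSPrime γ p ∧ l₀ * X < (p : ℝ) ^ 4 ∧ (p : ℝ) ^ 4 ≤ X then
      ((p : ℝ) ^ (1 - γ) * Real.log p : ℝ) * e (t * (p : ℝ) ^ 4)
    else 0

/-- The Fourier transform `Θ(x) = ∫ θ(y) e(-xy) dy` of a real function `θ`. -/
noncomputable def fourierTrans (θ : ℝ → ℝ) (x : ℝ) : ℂ :=
  ∫ y : ℝ, (θ y : ℂ) * e (-(x * y))

/-- `ε = X^{(219-220γ)/208+θ}`. -/
noncomputable def eps (γ θ X : ℝ) : ℝ := X ^ ((219 - 220 * γ) / 208 + θ)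

/-- `H = (log² X)/ε`. -/
noncomputable def H (γ θ X : ℝ) : ℝ := Real.log X ^ 2 / eps γ θ X

/-!
Each of the three exponential sums has at most `X + 1` terms of modulus at most `X²`, so is
trivially at most `2X³`. With `k = ⌊log X⌋₊`, the decay of `Θ` bounds the integrand by
`c |t|^{-(k+1)}`, whose integral over `|t| > H` is `2c H^{-k}/k`. Since `εH = log² X`, the factor
`ε^{-k}` in `c` cancels, leaving roughly `X⁹ (4k/(π log² X))^k ≤ e^{9(k+1)} (2/log X)^k`, which
is at most `1` once `log X` is large.
-/

open Real MeasureTheory Set Finset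

lemma norm_e (t : ℝ) : ‖e t‖ = 1 := by
  rw [e, Complex.norm_exp]
  simp

lemma norm_rpow_mul_log_mul_e_le {γ X : ℝ} (hγ : 0 ≤ γ) {p : ℕ} (hp : 1 ≤ (p : ℝ))
    (hpX : (p : ℝ) ≤ X) (w : ℝ) :
    ‖(((p : ℝ) ^ (1 - γ) * Real.log p : ℝ) : ℂ) * e w‖ ≤ X ^ 2 := by
  have hpow : (p : ℝ) ^ (1 - γ) ≤ X :=
    calc (p : ℝ) ^ (1 - γ) ≤ (p : ℝ) ^ (1 : ℝ) := rpow_le_rpow_of_exponent_le hp (by linarith)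
      _ ≤ X := by rwa [rpow_one]
  have hlog : Real.log p ≤ X := (log_le_sub_one_of_pos (by linarith)).trans (by linarith)
  have hlog0 : 0 ≤ Real.log p := log_nonneg hp
  rw [norm_mul, norm_e, mul_one, Complex.norm_real, Real.norm_of_nonneg (by positivity), sq]
  exact mul_le_mul hpow hlog hlog0 (by linarith)

lemma norm_sum_rpow_mul_log_mul_e_le {γ X : ℝ} (hγ : 0 ≤ γ) (hX : 1 ≤ X) (P : ℕ → Prop)
    [DecidablePred P] (hP : ∀ p, P p → 1 ≤ (p : ℝ) ∧ (p : ℝ) ≤ X) (w : ℕ → ℝ) :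
    ‖∑ p ∈ range (⌊X⌋₊ + 1),
        if P p then (((p : ℝ) ^ (1 - γ) * Real.log p : ℝ) : ℂ) * e (w p) else 0‖
      ≤ 2 * X ^ 3 := by
  have hterm : ∀ p ∈ range (⌊X⌋₊ + 1),
      ‖if P p then (((p : ℝ) ^ (1 - γ) * Real.log p : ℝ) : ℂ) * e (w p) else 0‖ ≤ X ^ 2 := by
    intro p _
    split_ifs with h
    · exact norm_rpow_mul_log_mul_e_le hγ (hP p h).1 (hP p h).2 _
    · simp only [norm_zero]; positivity
  have hcard : ((⌊X⌋₊ + 1 : ℕ) : ℝ) ≤ 2 * X := by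
    push_cast; linarith [Nat.floor_le (show 0 ≤ X by linarith)]
  calc _ ≤ _ := norm_sum_le _ _
    _ ≤ (⌊X⌋₊ + 1 : ℕ) * X ^ 2 := by
        simpa using Finset.sum_le_card_nsmul _ _ _ hterm
    _ ≤ 2 * X * X ^ 2 := by gcongr
    _ = 2 * X ^ 3 := by ring

lemma norm_S₁_le {γ X : ℝ} (hγ : 0 ≤ γ) (hX : 1 ≤ X) (l₀ t : ℝ) :
    ‖S₁ γ l₀ X t‖ ≤ 2 * X ^ 3 := by
  rw [S₁]
  classical
  refine norm_sum_rpow_mul_log_mul_e_le hγ hX _ ?_ _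
  rintro p ⟨⟨hp, -⟩, -, hpX⟩
  exact ⟨by exact_mod_cast hp.one_lt.le, hpX⟩

lemma norm_S₄_le {γ X : ℝ} (hγ : 0 ≤ γ) (hX : 1 ≤ X) (l₀ t : ℝ) :
    ‖S₄ γ l₀ X t‖ ≤ 2 * X ^ 3 := by
  rw [S₄]
  classical
  refine norm_sum_rpow_mul_log_mul_e_le hγ hX _ ?_ _
  rintro p ⟨⟨hp, -⟩, -, hpX⟩
  have hp1 : (1 : ℝ) ≤ p := by exact_mod_cast hp.one_lt.le
  exact ⟨hp1, (le_self_pow₀ hp1 (by norm_num)).trans hpX⟩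

lemma integral_abs_rpow_neg_of_abs_gt {H s : ℝ} (hH : 0 < H) (hs : 1 < s) :
    ∫ t in {t : ℝ | H < |t|}, |t| ^ (-s) = 2 * (H ^ (1 - s) / (s - 1)) := by
  have hind : {t : ℝ | H < |t|}.indicator (fun t => |t| ^ (-s))
      = fun t => (Ioi H).indicator (fun y => y ^ (-s)) |t| :=
    funext fun t => indicator_comp_right (s := Ioi H) (g := fun y : ℝ => y ^ (-s)) abs
  rw [← integral_indicator (measurableSet_lt measurable_const continuous_abs.measurable), hind,
    integral_comp_abs, setIntegral_indicator measurableSet_Ioi,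
    inter_eq_right.mpr (Ioi_subset_Ioi hH.le), integral_Ioi_rpow_of_lt (by linarith) hH]
  rw [show -s + 1 = 1 - s by ring, ← neg_div_neg_eq, neg_neg, neg_sub]

lemma integrableOn_abs_rpow_neg_of_abs_gt {H s : ℝ} (hH : 0 < H) (hs : 1 < s) :
    IntegrableOn (fun t : ℝ => |t| ^ (-s)) {t : ℝ | H < |t|} := by
  -- a non-integrable function would have integral `0`
  refine Integrable.of_integral_ne_zero ?_
  rw [integral_abs_rpow_neg_of_abs_gt hH hs]
  have : 0 < s - 1 := by linarith
  positivity

lemma norm_setIntegral_abs_gt_le {E : Type*} [NormedAddCommGroup E] [NormedSpace ℝ E]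
    {f : ℝ → E} {c H s : ℝ} (hH : 0 < H) (hs : 1 < s)
    (hf : ∀ t, H < |t| → ‖f t‖ ≤ c * |t| ^ (-s)) :
    ‖∫ t in {t : ℝ | H < |t|}, f t‖ ≤ c * (2 * (H ^ (1 - s) / (s - 1))) :=
  calc _ ≤ ∫ t in {t : ℝ | H < |t|}, ‖f t‖ := norm_integral_le_integral_norm _
    _ ≤ ∫ t in {t : ℝ | H < |t|}, c * |t| ^ (-s) :=
        setIntegral_mono_of_nonneg (fun _ _ => norm_nonneg _) hf
          ((integrableOn_abs_rpow_neg_of_abs_gt hH hs).const_mul c)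
    _ = _ := by rw [integral_const_mul, integral_abs_rpow_neg_of_abs_gt hH hs]

lemma one_div_mul_div_pow_eq_mul_abs_rpow (k : ℕ) (ε : ℝ) {t : ℝ} (ht : t ≠ 0) :
    1 / (π * |t|) * ((k : ℝ) / (2 * π * |t| * ε / 8)) ^ k
      = (4 * k / (π * ε)) ^ k / π * |t| ^ (-(k + 1 : ℝ)) := by
  have ht' : |t| ≠ 0 := abs_ne_zero.mpr ht
  rw [show (k : ℝ) / (2 * π * |t| * ε / 8) = 4 * k / (π * ε) * |t|⁻¹ by field_simp; ring,
    rpow_neg (abs_nonneg t), show (k + 1 : ℝ) = ((k + 1 : ℕ) : ℝ) by push_cast; ring,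
    rpow_natCast]
  ring

lemma exp_mul_mul_div_pow_floor_le {L : ℝ} (hL : 2 * exp 9 ≤ L) :
    exp (9 * L) * (2 / L) ^ ⌊L⌋₊ ≤ 2 * exp 18 / L := by
  have hL1 : 1 ≤ L := le_trans (by linarith [one_le_exp (show (0 : ℝ) ≤ 9 by norm_num)]) hL
  have hk : ⌊L⌋₊ ≠ 0 := (Nat.floor_pos.mpr hL1).ne'
  have hbase : 2 * exp 9 / L ≤ 1 := (div_le_one (by linarith)).mpr hL
  calc exp (9 * L) * (2 / L) ^ ⌊L⌋₊
      ≤ exp (9 * (⌊L⌋₊ + 1)) * (2 / L) ^ ⌊L⌋₊ := by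
        gcongr; exact (Nat.lt_floor_add_one L).le
    _ = exp 9 * (2 * exp 9 / L) ^ ⌊L⌋₊ := by
        rw [mul_add, mul_one, exp_add, mul_comm (9 : ℝ), exp_nat_mul, div_eq_mul_inv,
          div_eq_mul_inv, mul_assoc, mul_pow, mul_pow, mul_pow]
        ring
    _ ≤ exp 9 * (2 * exp 9 / L) := by gcongr; exact pow_le_of_le_one (by positivity) hbase hk
    _ = 2 * exp 18 / L := by rw [show (18 : ℝ) = 9 + 9 by norm_num, exp_add]; ring

lemma tail_bound_le_one {X ε : ℝ} (hX : exp (32 * exp 18) ≤ X) (hε : 0 < ε) :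
    (4 * ⌊log X⌋₊ / (π * ε)) ^ ⌊log X⌋₊ / π * (2 * X ^ 3) ^ 3 *
      (2 * ((log X ^ 2 / ε) ^ (1 - (⌊log X⌋₊ + 1 : ℝ)) / ((⌊log X⌋₊ + 1 : ℝ) - 1))) ≤ 1 := by
  have hX1 : 1 ≤ X := (one_le_exp (by positivity)).trans hX
  have hX0 : 0 < X := by linarith
  have hL : 32 * exp 18 ≤ log X := by simpa using log_le_log (exp_pos _) hX
  set L := log X
  set k := ⌊L⌋₊
  have hL9 : 2 * exp 9 ≤ L := le_trans (by
    linarith [exp_le_exp.mpr (show (9 : ℝ) ≤ 18 by norm_num), exp_pos (18 : ℝ)]) hL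
  have hL1 : 1 ≤ L := le_trans (by linarith [one_le_exp (show (0 : ℝ) ≤ 9 by norm_num)]) hL9
  have hL0 : 0 < L := by linarith
  have hk : (1 : ℝ) ≤ k := by exact_mod_cast Nat.floor_pos.mpr hL1
  have hkL : (k : ℝ) ≤ L := Nat.floor_le hL0.le
  have hX9 : X ^ 9 = exp (9 * L) := by rw [mul_comm, exp_mul, exp_log hX0]; norm_cast
  have hrpow : (L ^ 2 / ε) ^ (1 - (k + 1 : ℝ)) = ((L ^ 2 / ε) ^ k)⁻¹ := by
    rw [show 1 - (k + 1 : ℝ) = -(k : ℝ) by ring, rpow_neg (by positivity), rpow_natCast]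
  have hcancel : (4 * k / (π * ε)) ^ k * ((L ^ 2 / ε) ^ k)⁻¹ = (4 * k / (π * L ^ 2)) ^ k := by
    rw [← inv_pow, ← mul_pow]
    field_simp
  have hratio : 4 * k / (π * L ^ 2) ≤ 2 / L := by
    rw [div_le_div_iff₀ (by positivity) hL0]
    nlinarith [pi_gt_three]
  calc _ = 16 * X ^ 9 / (π * k) * (4 * k / (π * L ^ 2)) ^ k := by
        rw [hrpow, add_sub_cancel_right, ← hcancel]
        ring
    _ ≤ 16 * X ^ 9 * (2 / L) ^ k := by
        gcongr
        exact div_le_self (by positivity) (by nlinarith [pi_gt_three])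
    _ = 16 * (exp (9 * L) * (2 / L) ^ k) := by rw [hX9]; ring
    _ ≤ 16 * (2 * exp 18 / L) := by gcongr; exact exp_mul_mul_div_pow_floor_le hL9
    _ ≤ 1 := by rw [mul_div_assoc', div_le_one hL0]; linarith

lemma norm_integrand_le {γ X : ℝ} (hγ : 0 ≤ γ) (hX : 1 ≤ X) (Θ : ℂ) (l₀ l₁ l₂ l₃ η t : ℝ) :
    ‖Θ * S₁ γ l₀ X (l₁ * t) * S₁ γ l₀ X (l₂ * t) * S₄ γ l₀ X (l₃ * t) * e (η * t)‖
      ≤ ‖Θ‖ * (2 * X ^ 3) ^ 3 := by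
  simp only [norm_mul, norm_e, mul_one]
  rw [pow_three, ← mul_assoc, ← mul_assoc]
  gcongr
  exacts [norm_S₁_le hγ hX _ _, norm_S₁_le hγ hX _ _, norm_S₄_le hγ hX _ _]

theorem Gamma3_bound_general (l₁ l₂ l₃ l₀ η γ θ : ℝ)
    (hγ : 219 / 220 < γ) :
    ∃ C > 0, ∃ X₀ : ℝ, ∀ X : ℝ, X₀ ≤ X → ∀ sm : ℝ → ℝ, Continuous sm →
      (∀ y : ℝ, |y| ≤ 3 * eps γ θ X / 4 → sm y = 1) →
      (∀ y : ℝ, 3 * eps γ θ X / 4 < |y| → |y| < eps γ θ X → 0 < sm y ∧ sm y < 1) →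
      (∀ y : ℝ, eps γ θ X ≤ |y| → sm y = 0) →
      (∀ x : ℝ, x ≠ 0 →
        ‖fourierTrans sm x‖ ≤
          1 / (Real.pi * |x|) *
            ((⌊Real.log X⌋₊ : ℝ) /
              (2 * Real.pi * |x| * eps γ θ X / 8)) ^ (⌊Real.log X⌋₊)) →
      ‖∫ t in {t : ℝ | H γ θ X < |t|},
          fourierTrans sm t * S₁ γ l₀ X (l₁ * t) * S₁ γ l₀ X (l₂ * t) *
            S₄ γ l₀ X (l₃ * t) * e (η * t)‖ ≤ C := by
  refine ⟨1, one_pos, exp (32 * exp 18), fun X hX sm _ _ _ _ hΘ => ?_⟩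
  have hX1 : 1 ≤ X := (one_le_exp (by positivity)).trans hX
  have hX0 : 0 < X := by linarith
  have hlog : 1 ≤ log X := (le_log_iff_exp_le hX0).mpr <| (exp_le_exp.mpr <| by
    linarith [one_le_exp (show (0 : ℝ) ≤ 18 by norm_num)]).trans hX
  have hε : 0 < eps γ θ X := rpow_pos_of_pos hX0 _
  have hH : 0 < H γ θ X := div_pos (by positivity) hε
  have hs : (1 : ℝ) < ⌊log X⌋₊ + 1 := by simpa using Nat.floor_pos.mpr hlog
  refine (norm_setIntegral_abs_gt_le hH hs fun t ht => ?_).trans (tail_bound_le_one hX hε)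
  have ht0 : t ≠ 0 := by rintro rfl; rw [abs_zero] at ht; linarith
  calc _ ≤ ‖fourierTrans sm t‖ * (2 * X ^ 3) ^ 3 :=
        norm_integrand_le (by linarith) hX1 ..
    _ ≤ _ := mul_le_mul_of_nonneg_right (hΘ t ht0) (by positivity)
    _ = _ := by rw [one_div_mul_div_pow_eq_mul_abs_rpow _ _ ht0]; ring

theorem Gamma3_bound (l₁ l₂ l₃ l₀ η γ θ : ℝ)
    (h₁ : l₁ ≠ 0) (h₂ : l₂ ≠ 0) (h₃ : l₃ ≠ 0)
    (hl₀ : 0 < l₀) (hl₀1 : l₀ < 1)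
    (hγ : 219 / 220 < γ) (hγ1 : γ < 1) (hθ : 0 < θ) :
    ∃ C > 0, ∃ X₀ : ℝ, ∀ X : ℝ, X₀ ≤ X → ∀ sm : ℝ → ℝ, Continuous sm →
      (∀ y : ℝ, |y| ≤ 3 * eps γ θ X / 4 → sm y = 1) →
      (∀ y : ℝ, 3 * eps γ θ X / 4 < |y| → |y| < eps γ θ X → 0 < sm y ∧ sm y < 1) →
      (∀ y : ℝ, eps γ θ X ≤ |y| → sm y = 0) →
      (∀ x : ℝ, x ≠ 0 →
        ‖fourierTrans sm x‖ ≤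
          1 / (Real.pi * |x|) *
            ((⌊Real.log X⌋₊ : ℝ) /
              (2 * Real.pi * |x| * eps γ θ X / 8)) ^ (⌊Real.log X⌋₊)) →
      ‖∫ t in {t : ℝ | H γ θ X < |t|},
          fourierTrans sm t * S₁ γ l₀ X (l₁ * t) * S₁ γ l₀ X (l₂ * t) *
            S₄ γ l₀ X (l₃ * t) * e (η * t)‖ ≤ C :=
  Gamma3_bound_general l₁ l₂ l₃ l₀ η γ θ hγ
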